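/- arXiv:1906.01591 — 2 statements merged into one kernel-verified Lean document; each statement's English description precedes it below -/
import Mathlib

section
/- Let G be a finite simple edge-transitive graph with an odd number of edges. Then there is no perfect edge state transfer in G: there do not exist edges {a,b} and {c,d} of G with {a,b} ≠ {c,d}, a time t, and γ ∈ ℂ with |γ| = 1 such that exp(itL)(e_a − e_b) = γ(e_c − e_d), where L is the Laplacian of G. -/
open Matrix

variable {V : Type*}

/-- The transition matrix `U(t) = exp(itL)` of the continuous quantum walk on `G`,
where `L` is the Laplacian of `G`. -/
noncomputable def transitionMatrix [Fintype V] [DecidableEq V] (G : SimpleGraph V)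
    [DecidableRel G.Adj] (t : ℝ) : Matrix V V ℂ :=
  NormedSpace.exp ((Complex.I * (t : ℂ)) • G.lapMatrix ℂ)

/-- The pair state `e_a - e_b`. -/
def pairState [DecidableEq V] (a b : V) : V → ℂ := Pi.single a 1 - Pi.single b 1

/-- Perfect pair state transfer from `(a,b)` to `(c,d)` at time `t`. -/
def PerfectPairStateTransfer [Fintype V] [DecidableEq V] (G : SimpleGraph V)
    [DecidableRel G.Adj] (t : ℝ) (a b c d : V) : Prop :=
  ∃ γ : ℂ, ‖γ‖ = 1 ∧
    (transitionMatrix G t).mulVec (pairState a b) = γ • pairState c d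

/-!
Graph automorphisms commute with `U(t)`, so by edge-transitivity every edge state is sent by
`U(t)` to `γ` times some edge state, with the same phase `γ` (up to orientation) as in the given
transfer. Since `U(t)` is symmetric and unitary and edge states are real, this transfer relation
is symmetric, hence an involution on the edges. An odd number of edges forces a fixed edge, and
transporting it to `{a,b}` by an automorphism shows that `{a,b}` transfers to itself, not to
`{c,d}`.
-/

lemma exists_rel_self_of_odd_card {α : Type*} [Fintype α] (hα : Odd (Fintype.card α))
    {R : α → α → Prop} (hsymm : ∀ x y, R x y → R y x) (htotal : ∀ x, ∃ y, R x y)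
    (hunique : ∀ x y z, R x y → R x z → y = z) : ∃ x, R x x := by
  choose f hf using htotal
  have hinv : Function.Involutive f := fun x => hunique _ _ _ (hf (f x)) (hsymm _ _ (hf x))
  obtain ⟨x, hx⟩ := Equiv.Perm.exists_fixed_point_of_prime (p := 2) (n := 1)
    (σ := hinv.toPerm f) (Nat.two_dvd_ne_zero.mpr (Nat.odd_iff.mp hα))
    (by ext x; simp [sq, hinv x])
  refine ⟨x, ?_⟩
  simpa [show f x = x from hx] using hf x

namespace Matrix

variable {n R : Type*} [Fintype n] [DecidableEq n]

lemma commute_permMatrix_iff [CommRing R] (σ : Equiv.Perm n) (A : Matrix n n R) :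
    Commute (σ.permMatrix R) A ↔ A.submatrix σ σ = A := by
  rw [Commute, SemiconjBy, Equiv.Perm.permMatrix, PEquiv.toMatrix_toPEquiv_mul,
    PEquiv.mul_toMatrix_toPEquiv]
  constructor
  · intro h
    ext i j
    simpa using congrFun (congrFun h i) (σ j)
  · intro h
    ext i j
    simpa using congrFun (congrFun h i) (σ.symm j)

lemma submatrix_exp_of_submatrix_eq [CommRing R] [TopologicalSpace R] [IsTopologicalRing R]
    [T2Space R] {A : Matrix n n R} (σ : Equiv.Perm n)
    (h : A.submatrix σ σ = A) : (NormedSpace.exp A).submatrix σ σ = NormedSpace.exp A := by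
  rw [← commute_permMatrix_iff] at h ⊢
  exact h.exp_right

omit [DecidableEq n] in
lemma mulVec_comp_symm_of_submatrix_eq [NonUnitalNonAssocSemiring R] {A : Matrix n n R}
    (σ : Equiv.Perm n) (h : A.submatrix σ σ = A) (v : n → R) :
    A *ᵥ (v ∘ σ.symm) = (A *ᵥ v) ∘ σ.symm := by
  conv_rhs => rw [← h, submatrix_mulVec_equiv, Function.comp_assoc, Equiv.self_comp_symm,
    Function.comp_id]

lemma mulVec_eq_smul_symm [CommRing R] [StarRing R] {U : Matrix n n R}
    (hU : U ∈ unitaryGroup n R) (hUs : U.IsSymm) {x y : n → R} (hx : star x = x)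
    (hy : star y = y) {γ : R} (hγ : star γ * γ = 1) (h : U *ᵥ x = γ • y) :
    U *ᵥ y = γ • x := by
  have hstar : star U *ᵥ x = star γ • y := by
    rw [star_eq_conjTranspose, mulVec_conjTranspose, hx, ← mulVec_transpose, hUs.eq, h,
      star_smul, hy]
  have hx' : x = star γ • U *ᵥ y := by
    rw [← mulVec_smul, ← hstar, mulVec_mulVec, mem_unitaryGroup_iff.mp hU, one_mulVec]
  rw [hx', smul_smul, mul_comm, hγ, one_smul]

end Matrix

lemma SimpleGraph.Iso.submatrix_lapMatrix {W R : Type*} [Fintype V] [Fintype W]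
    [DecidableEq V] [DecidableEq W] {G : SimpleGraph V} {H : SimpleGraph W} [DecidableRel G.Adj]
    [DecidableRel H.Adj] [AddGroupWithOne R] (f : G ≃g H) :
    (H.lapMatrix R).submatrix f f = G.lapMatrix R := by
  ext i j
  simp [SimpleGraph.lapMatrix, SimpleGraph.degMatrix, diagonal_apply, f.map_adj_iff]

section TransitionMatrix

variable [Fintype V] [DecidableEq V] (G : SimpleGraph V) [DecidableRel G.Adj] (t : ℝ)

lemma transitionMatrix_isSymm : (transitionMatrix G t).IsSymm :=
  ((G.isSymm_lapMatrix ℂ).smul _).exp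

lemma transitionMatrix_mem_unitaryGroup : transitionMatrix G t ∈ unitaryGroup V ℂ := by
  have hstar : star (Complex.I * t) • G.lapMatrix ℂ = -((Complex.I * t) • G.lapMatrix ℂ) := by
    rw [← neg_smul]
    congr 1
    simp
  rw [mem_unitaryGroup_iff, star_eq_conjTranspose, transitionMatrix, ← exp_conjTranspose,
    conjTranspose_smul, (G.isHermitian_lapMatrix ℂ).eq, hstar,
    ← exp_add_of_commute _ _ ((Commute.refl ((Complex.I * t) • G.lapMatrix ℂ)).neg_right),
    add_neg_cancel, NormedSpace.exp_zero]

lemma transitionMatrix_submatrix (σ : G ≃g G) :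
    (transitionMatrix G t).submatrix σ σ = transitionMatrix G t :=
  submatrix_exp_of_submatrix_eq σ.toEquiv
    (congrArg ((Complex.I * t) • ·) (σ.submatrix_lapMatrix (R := ℂ)))

end TransitionMatrix

section PairState

variable [DecidableEq V]

lemma pairState_swap (a b : V) : pairState b a = -pairState a b :=
  (neg_sub _ _).symm

lemma star_pairState (a b : V) : star (pairState a b) = pairState a b := by
  simp [pairState, Pi.star_single]

lemma pairState_comp_symm (σ : V ≃ V) (a b : V) :
    pairState a b ∘ σ.symm = pairState (σ a) (σ b) := by
  ext i
  simp [pairState, Pi.single_apply, Equiv.symm_apply_eq]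

lemma pairState_eq_pairState_iff {a b c d : V} (hab : a ≠ b) :
    pairState a b = pairState c d ↔ a = c ∧ b = d := by
  refine ⟨fun h => ?_, by rintro ⟨rfl, rfl⟩; rfl⟩
  have ha := congrFun h a
  have hb := congrFun h b
  simp [pairState, Pi.single_apply, hab, hab.symm] at ha hb
  grind

end PairState

/-- `U` sends the state of the unordered pair `e` to `γ` times the state of `f`, for some
orientations of `e` and `f`; reversing both orientations flips both signs, so this does not depend
on the orientation chosen for `e`. -/
def TransfersTo [Fintype V] [DecidableEq V] (U : Matrix V V ℂ) (γ : ℂ) (e f : Sym2 V) : Prop :=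
  ∃ a b c d, e = s(a, b) ∧ f = s(c, d) ∧ U *ᵥ pairState a b = γ • pairState c d

namespace TransfersTo

variable [Fintype V] [DecidableEq V] {U : Matrix V V ℂ} {γ : ℂ} {e f f' : Sym2 V}

lemma mk_left_iff {a b : V} :
    TransfersTo U γ s(a, b) f ↔ ∃ c d, f = s(c, d) ∧ U *ᵥ pairState a b = γ • pairState c d := by
  refine ⟨?_, fun ⟨c, d, hf, h⟩ => ⟨a, b, c, d, rfl, hf, h⟩⟩
  rintro ⟨a', b', c, d, he, rfl, h⟩
  rcases Sym2.eq_iff.mp he with ⟨rfl, rfl⟩ | ⟨rfl, rfl⟩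
  · exact ⟨c, d, rfl, h⟩
  · refine ⟨d, c, Sym2.eq_swap, ?_⟩
    rw [pairState_swap b a, mulVec_neg, h, pairState_swap c d, smul_neg]

lemma right_unique (hγ : γ ≠ 0) (hf : ¬ f.IsDiag) (h : TransfersTo U γ e f)
    (h' : TransfersTo U γ e f') : f = f' := by
  obtain ⟨a, b, -, -, rfl, -⟩ := id h
  obtain ⟨c, d, rfl, hcd⟩ := mk_left_iff.mp h
  obtain ⟨c', d', rfl, hcd'⟩ := mk_left_iff.mp h'
  obtain ⟨rfl, rfl⟩ := (pairState_eq_pairState_iff (by simpa using hf)).mp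
    (smul_right_injective _ hγ (hcd.symm.trans hcd'))
  rfl

lemma symm (hU : U ∈ unitaryGroup V ℂ) (hUs : U.IsSymm) (hγ : star γ * γ = 1)
    (h : TransfersTo U γ e f) : TransfersTo U γ f e := by
  obtain ⟨a, b, c, d, rfl, rfl, h⟩ := h
  exact ⟨c, d, a, b, rfl, rfl, mulVec_eq_smul_symm hU hUs (star_pairState a b)
    (star_pairState c d) hγ h⟩

lemma map (σ : V ≃ V) (hσ : U.submatrix σ σ = U) (h : TransfersTo U γ e f) :
    TransfersTo U γ (e.map σ) (f.map σ) := by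
  obtain ⟨a, b, c, d, rfl, rfl, h⟩ := h
  refine ⟨σ a, σ b, σ c, σ d, rfl, rfl, ?_⟩
  rw [← pairState_comp_symm, ← pairState_comp_symm, mulVec_comp_symm_of_submatrix_eq σ hσ, h]
  rfl

end TransfersTo

/-- An edge-transitive graph with an odd number of edges has no perfect edge state
transfer. -/
theorem no_pst_odd_edge_transitive [Fintype V] [DecidableEq V] (G : SimpleGraph V)
    [DecidableRel G.Adj]
    (hET : ∀ e ∈ G.edgeSet, ∀ f ∈ G.edgeSet, ∃ σ : G ≃g G, Sym2.map σ e = f)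
    (hodd : Odd G.edgeFinset.card) :
    ¬ ∃ (a b c d : V) (t : ℝ), G.Adj a b ∧ G.Adj c d ∧ s(a, b) ≠ s(c, d) ∧
        PerfectPairStateTransfer G t a b c d := by
  rintro ⟨a, b, c, d, t, hab, hcd, hne, γ, hγ, hU⟩
  set U := transitionMatrix G t
  have hγ0 : γ ≠ 0 := norm_ne_zero_iff.mp (hγ ▸ one_ne_zero)
  have hγ' : star γ * γ = 1 := by
    rw [Complex.star_def, Complex.conj_mul', hγ]
    norm_num
  have habcd : TransfersTo U γ s(a, b) s(c, d) := ⟨a, b, c, d, rfl, rfl, hU⟩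
  have hmap (σ : G ≃g G) {e f : Sym2 V} (h : TransfersTo U γ e f) :
      TransfersTo U γ (e.map σ) (f.map σ) :=
    h.map σ.toEquiv (transitionMatrix_submatrix G t σ)
  have hsymm (e f : G.edgeSet) (h : TransfersTo U γ e f) : TransfersTo U γ f e :=
    h.symm (transitionMatrix_mem_unitaryGroup G t) (transitionMatrix_isSymm G t) hγ'
  have htotal (e : G.edgeSet) : ∃ f : G.edgeSet, TransfersTo U γ e f := by
    obtain ⟨σ, hσ⟩ := hET s(a, b) hab e e.2
    exact ⟨⟨s(c, d).map σ, σ.map_mem_edgeSet_iff.mpr hcd⟩, hσ ▸ hmap σ habcd⟩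
  have hunique (e f f' : G.edgeSet) (h : TransfersTo U γ e f) (h' : TransfersTo U γ e f') :
      f = f' :=
    Subtype.ext (h.right_unique hγ0 (G.not_isDiag_of_mem_edgeSet f.2) h')
  obtain ⟨⟨e, he⟩, hee⟩ :=
    exists_rel_self_of_odd_card (by rwa [← G.edgeFinset_card]) hsymm htotal hunique
  obtain ⟨σ, hσ⟩ := hET e he s(a, b) hab
  have haa : TransfersTo U γ s(a, b) s(a, b) := hσ ▸ hmap σ hee
  exact hne (habcd.right_unique hγ0 (G.not_isDiag_of_mem_edgeSet hcd) haa).symm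
end

section
/- Let G be a finite simple graph on n vertices, Ḡ its complement, and let a ≠ b and c ≠ d be vertices. For every time t, there is perfect pair state transfer between e_a − e_b and e_c − e_d at time t in G if and only if there is perfect pair state transfer between e_a − e_b and e_c − e_d at time t in Ḡ. -/
open Matrix

variable {V : Type*}

/-!
Write `n = |V|` and `J` for the all-ones matrix. Since `L(Gᶜ) = n • 1 - J - L(G)`, where `J`
commutes with `L(G)` and annihilates every vector with coordinate sum zero, the walk on `Gᶜ`
acts on such vectors as `e^{itn} exp(-itL(G))`. As `L(G)` is real and symmetric,
`exp(-itL(G))` is the entrywise complex conjugate of `exp(itL(G))`. Hence on the real vector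
`e_a - e_b` the walk on `Gᶜ` is, up to the phase `e^{itn}`, the conjugate of the walk on `G`,
which turns pair state transfer in `G` into pair state transfer in `Gᶜ`; as `Gᶜᶜ = G`, the
converse follows.
-/

namespace Matrix

variable {m 𝕂 : Type*} [Fintype m] [DecidableEq m] [RCLike 𝕂]

theorem exp_mulVec_of_mulVec_eq_smul {M : Matrix m m 𝕂} {v : m → 𝕂} {μ : 𝕂}
    (h : M *ᵥ v = μ • v) : NormedSpace.exp M *ᵥ v = NormedSpace.exp μ • v := by
  open scoped Norms.Operator in
  have hM := (NormedSpace.exp_series_hasSum_exp' (𝕂 := 𝕂) M).map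
    (mulVec.addMonoidHomLeft v) (continuous_id.matrix_mulVec continuous_const)
  have hpow (n : ℕ) : M ^ n *ᵥ v = μ ^ n • v := by
    induction n with
    | zero => simp
    | succ n ih => rw [pow_succ, ← mulVec_mulVec, h, mulVec_smul, ih, smul_smul, pow_succ']
  have hμ := (NormedSpace.exp_series_hasSum_exp' (𝕂 := 𝕂) μ).smul_const v
  refine hM.unique (hμ.congr_fun fun n => ?_)
  change ((n.factorial⁻¹ : 𝕂) • M ^ n) *ᵥ v = _
  rw [smul_mulVec, hpow, smul_smul, smul_eq_mul]

end Matrix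

namespace SimpleGraph

variable {R : Type*} [Fintype V] [DecidableEq V] (G : SimpleGraph V) [DecidableRel G.Adj]

theorem lapMatrix_compl [Ring R] :
    Gᶜ.lapMatrix R = (Fintype.card V : R) • (1 : Matrix V V R) - of 1 - G.lapMatrix R := by
  ext i j
  rcases eq_or_ne i j with rfl | hij
  · have hdeg : 1 + G.degree i ≤ Fintype.card V := by
      have := G.degree_lt_card_verts i
      omega
    simp only [lapMatrix, degMatrix, degree_compl, Nat.sub_sub, Matrix.sub_apply,
      diagonal_apply_eq, Nat.cast_sub hdeg, Nat.cast_add, Nat.cast_one, adjMatrix_apply,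
      SimpleGraph.irrefl, ↓reduceIte, sub_zero, Matrix.smul_apply, one_apply_eq, smul_eq_mul,
      mul_one, of_apply, Pi.one_apply]
    abel
  · by_cases hadj : G.Adj i j <;> simp [lapMatrix, degMatrix, hij, hadj]

theorem lapMatrix_mul_of_one [NonAssocRing R] : G.lapMatrix R * of 1 = 0 := by
  ext i j
  simpa [mul_apply, mulVec, dotProduct] using
    congrFun (G.lapMatrix_mulVec_const_eq_zero (R := R)) i

theorem commute_lapMatrix_of_one [CommRing R] : Commute (G.lapMatrix R) (of 1) := by
  have hsymm : (of 1 : Matrix V V R)ᵀ = of 1 := rfl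
  rw [Commute, SemiconjBy, lapMatrix_mul_of_one, ← (G.isSymm_lapMatrix R).eq, ← hsymm,
    ← transpose_mul, lapMatrix_mul_of_one, transpose_zero]

end SimpleGraph

section Transfer

variable [Fintype V] [DecidableEq V] (G : SimpleGraph V) [DecidableRel G.Adj]

theorem isSymm_transitionMatrix (t : ℝ) : (transitionMatrix G t).IsSymm :=
  ((G.isSymm_lapMatrix ℂ).smul _).exp

theorem transitionMatrix_neg (t : ℝ) :
    transitionMatrix G (-t) = (transitionMatrix G t).map (starRingEnd ℂ) := by
  calc transitionMatrix G (-t) = (transitionMatrix G t)ᴴ := by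
        rw [transitionMatrix, transitionMatrix, ← exp_conjTranspose, conjTranspose_smul,
          (G.isHermitian_lapMatrix ℂ).eq]
        congr 2
        simp
    _ = (transitionMatrix G t)ᵀᴴ := by rw [(isSymm_transitionMatrix G t).eq]
    _ = (transitionMatrix G t).map (starRingEnd ℂ) := rfl

theorem transitionMatrix_compl_mulVec {v : V → ℂ} (hv : ∑ i, v i = 0) (t : ℝ) :
    transitionMatrix Gᶜ t *ᵥ v
      = Complex.exp (Complex.I * t * Fintype.card V) • (transitionMatrix G (-t) *ᵥ v) := by
  set J : Matrix V V ℂ := (Complex.I * t) • ((Fintype.card V : ℂ) • 1 - of 1)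
  have hsplit : (Complex.I * t) • Gᶜ.lapMatrix ℂ
      = (Complex.I * ((-t : ℝ) : ℂ)) • G.lapMatrix ℂ + J := by
    rw [G.lapMatrix_compl]
    push_cast
    module
  have hcomm : Commute ((Complex.I * ((-t : ℝ) : ℂ)) • G.lapMatrix ℂ) J :=
    (((Commute.one_right _).smul_right _).sub_right
      (G.commute_lapMatrix_of_one)).smul_left _ |>.smul_right _
  have hJ : J *ᵥ v = (Complex.I * t * Fintype.card V) • v := by
    have hones : (of 1 : Matrix V V ℂ) *ᵥ v = 0 := by
      ext i
      simp [mulVec, dotProduct, hv]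
    rw [smul_mulVec, sub_mulVec, smul_mulVec, one_mulVec, hones, sub_zero, smul_smul]
  rw [transitionMatrix, hsplit, exp_add_of_commute _ _ hcomm, ← mulVec_mulVec,
    exp_mulVec_of_mulVec_eq_smul hJ, mulVec_smul, Complex.exp_eq_exp_ℂ]
  rfl

end Transfer

section PairState

variable [DecidableEq V]

theorem sum_pairState [Fintype V] (a b : V) : ∑ i, pairState a b i = 0 := by
  simp [pairState, Finset.sum_sub_distrib]

theorem starRingEnd_pairState_apply (a b i : V) :
    starRingEnd ℂ (pairState a b i) = pairState a b i := by
  simp only [pairState, Pi.sub_apply, Pi.single_apply]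
  split_ifs <;> simp

end PairState

theorem PerfectPairStateTransfer.compl [Fintype V] [DecidableEq V] {G : SimpleGraph V}
    [DecidableRel G.Adj] {t : ℝ} {a b c d : V} (h : PerfectPairStateTransfer G t a b c d) :
    PerfectPairStateTransfer Gᶜ t a b c d := by
  obtain ⟨γ, hγ, hU⟩ := h
  refine ⟨Complex.exp (Complex.I * t * Fintype.card V) * starRingEnd ℂ γ, ?_, ?_⟩
  · rw [norm_mul, Complex.norm_exp, Complex.norm_conj, hγ]
    simp
  · have hreal : starRingEnd ℂ ∘ pairState a b = pairState a b :=
      funext (starRingEnd_pairState_apply a b)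
    ext i
    rw [transitionMatrix_compl_mulVec G (sum_pairState a b), transitionMatrix_neg, ← hreal,
      Pi.smul_apply, ← RingHom.map_mulVec, hU]
    simp [starRingEnd_pairState_apply, mul_assoc]

theorem pst_compl_general [Fintype V] [DecidableEq V] (G : SimpleGraph V) [DecidableRel G.Adj]
    (a b c d : V) (t : ℝ) :
    PerfectPairStateTransfer G t a b c d ↔ PerfectPairStateTransfer Gᶜ t a b c d := by
  refine ⟨PerfectPairStateTransfer.compl, fun h => ?_⟩
  simpa using h.compl

/-- Perfect pair state transfer in `G` is equivalent to perfect pair state transfer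
in the complement of `G`, at every time. -/
theorem pst_compl [Fintype V] [DecidableEq V] (G : SimpleGraph V) [DecidableRel G.Adj]
    (a b c d : V) (hab : a ≠ b) (hcd : c ≠ d) (t : ℝ) :
    PerfectPairStateTransfer G t a b c d ↔ PerfectPairStateTransfer Gᶜ t a b c d :=
  pst_compl_general G a b c d t
end
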